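/- arXiv:1407.4147 — 2 statements merged into one kernel-verified Lean document; each statement's English description precedes it below -/
import Mathlib

section
/- The twisted-cube support C(c,ℓ) is closed in ℝ^n if and only if m_σ ∈ P(c,ℓ) for every sign vector σ ∈ {+,−}^n, where P(c,ℓ) := {x ∈ ℝ^n : 0 ≤ x_j ≤ A_j(x) for all 1 ≤ j ≤ n}. -/
/-- The affine functions `A_j(x) = ℓ_j − Σ_{k>j} c_{jk} x_k` (for the top index the sum
is empty so `A_n = ℓ_n`). Indices are 0-based via `Fin n`. -/
def Afun (n : ℕ) (c : Fin n → Fin n → ℤ) (L : Fin n → ℤ) (j : Fin n) (x : Fin n → ℝ) : ℝ :=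
  (L j : ℝ) - ∑ k ∈ Finset.univ.filter (fun k => j < k), (c j k : ℝ) * x k

/-- Condition (S-k): `A_k(x) < x_k < 0` or `0 ≤ x_k ≤ A_k(x)`. -/
def Scond (n : ℕ) (c : Fin n → Fin n → ℤ) (L : Fin n → ℤ) (k : Fin n) (x : Fin n → ℝ) : Prop :=
  (Afun n c L k x < x k ∧ x k < 0) ∨ (0 ≤ x k ∧ x k ≤ Afun n c L k x)

/-- The twisted-cube support `C(c,ℓ)`. -/
def Cset (n : ℕ) (c : Fin n → Fin n → ℤ) (L : Fin n → ℤ) : Set (Fin n → ℝ) :=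
  {x | ∀ k, Scond n c L k x}

/-- The polytope `P(c,ℓ) = {x : 0 ≤ x_j ≤ A_j(x) for all j}`. -/
def Pset (n : ℕ) (c : Fin n → Fin n → ℤ) (L : Fin n → ℤ) : Set (Fin n → ℝ) :=
  {x | ∀ j, 0 ≤ x j ∧ x j ≤ Afun n c L j x}

/-- Condition (P): for each `k`, whenever the coordinates above `k` satisfy
`0 ≤ x_j ≤ A_j(x)`, one has `A_k(x) ≥ 0`. (For the top index this says `ℓ_n ≥ 0`.) -/
def CondP (n : ℕ) (c : Fin n → Fin n → ℤ) (L : Fin n → ℤ) : Prop :=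
  ∀ k : Fin n, ∀ x : Fin n → ℝ,
    (∀ j : Fin n, k < j → 0 ≤ x j ∧ x j ≤ Afun n c L j x) →
    0 ≤ Afun n c L k x

/-- The Cartier data `m_σ` for a sign vector `σ` (`true` = `+`, `false` = `−`), defined by
downward recursion: `m_{σ,j} = 0` if `σ_j = +`, and `m_{σ,j} = A_j(m_σ)` if `σ_j = −`. -/
noncomputable def mvec (n : ℕ) (c : Fin n → Fin n → ℤ) (L : Fin n → ℤ)
    (σ : Fin n → Bool) (j : Fin n) : ℝ :=
  if σ j then 0
  else (L j : ℝ) - ∑ k ∈ (Finset.univ.filter (fun k => j < k)).attach,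
      (c j k.1 : ℝ) * mvec n c L σ k.1
termination_by n - j.1
decreasing_by
  have hk := Fin.lt_iff_val_lt_val.mp (Finset.mem_filter.mp k.2).2
  have := k.1.isLt
  omega

/-!
`C(c,ℓ)` is closed exactly when condition (P) holds, i.e. `A_k ≥ 0` on every point whose
coordinates above `k` satisfy the inequalities of `P(c,ℓ)`. If (P) holds, a downward induction
shows `C(c,ℓ) = P(c,ℓ)`, a closed polytope. If (P) fails at `k`, fill the coordinates below `k`
continuously so as to stay in `C(c,ℓ)`; letting `x_k ↓ A_k(x) < 0` gives a limit point outside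
`C(c,ℓ)`.

Condition (P) is in turn equivalent to `m_σ ∈ P(c,ℓ)` for all `σ`: one direction is a downward
induction along the recursion defining `m_σ`; for the other, a linear functional of the
coordinates above `k` is maximised over the partial polytope at some `m_σ`, because eliminating
the lowest coordinate `x_{k+1} ∈ [0, A_{k+1}(x)]` puts it at an endpoint, which is the choice of
`σ_{k+1}`, and leaves a linear functional of the higher coordinates. Applied to
`x ↦ Σ_{j>k} c_{kj} x_j` this gives `A_k(x) ≥ A_k(m_σ) ≥ 0`.
-/

open Finset

variable {n : ℕ} {c : Fin n → Fin n → ℤ} {L : Fin n → ℤ}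

lemma afun_eq_sub_sum_Ioi (j : Fin n) (x : Fin n → ℝ) :
    Afun n c L j x = L j - ∑ k ∈ Ioi j, (c j k : ℝ) * x k := by
  rw [Afun, filter_lt_eq_Ioi]

lemma afun_congr {j : Fin n} {x y : Fin n → ℝ} (h : ∀ i, j < i → x i = y i) :
    Afun n c L j x = Afun n c L j y := by
  simp only [afun_eq_sub_sum_Ioi]
  congr 1
  exact sum_congr rfl fun i hi => by rw [h i (mem_Ioi.mp hi)]

lemma continuous_afun (j : Fin n) : Continuous (Afun n c L j) := by
  unfold Afun
  fun_prop

lemma scond_congr {j : Fin n} {x y : Fin n → ℝ} (h : ∀ i, j ≤ i → x i = y i) :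
    Scond n c L j x ↔ Scond n c L j y := by
  rw [Scond, Scond, h j le_rfl, afun_congr fun i hi => h i hi.le]

lemma mvec_eq (σ : Fin n → Bool) (j : Fin n) :
    mvec n c L σ j = if σ j then 0 else Afun n c L j (mvec n c L σ) := by
  rw [mvec, sum_attach _ fun k => (c j k : ℝ) * mvec n c L σ k]
  rfl

lemma mvec_congr {σ τ : Fin n → Bool} {j : Fin n} (h : ∀ i, j ≤ i → σ i = τ i) :
    mvec n c L σ j = mvec n c L τ j := by
  induction j using WellFoundedGT.induction with
  | _ j ih =>
    rw [mvec_eq, mvec_eq, h j le_rfl,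
      afun_congr fun i hi => ih i hi fun i' hi' => h i' (hi.le.trans hi')]

lemma mvec_update_of_lt {σ : Fin n → Bool} {k j : Fin n} (b : Bool) (hkj : k < j) :
    mvec n c L (Function.update σ k b) j = mvec n c L σ j :=
  mvec_congr fun _ hi => Function.update_of_ne (hkj.trans_le hi).ne' _ _

lemma sum_Ioi_mul_mvec_update (σ : Fin n → Bool) (k : Fin n) (b : Bool) (f : Fin n → ℝ) :
    ∑ j ∈ Ioi k, f j * mvec n c L (Function.update σ k b) j =
      ∑ j ∈ Ioi k, f j * mvec n c L σ j :=
  sum_congr rfl fun _ hj => by rw [mvec_update_of_lt _ (mem_Ioi.mp hj)]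

lemma mvec_mem_Pset_of_condP (hP : CondP n c L) (σ : Fin n → Bool) :
    mvec n c L σ ∈ Pset n c L := by
  intro j
  induction j using WellFoundedGT.induction with
  | _ j ih =>
    have hA : 0 ≤ Afun n c L j (mvec n c L σ) := hP j _ ih
    rw [mvec_eq]
    split_ifs <;> simp [hA]

theorem exists_sum_Ioi_le_sum_mvec (k : Fin n) {x : Fin n → ℝ}
    (hx : ∀ j, k < j → 0 ≤ x j ∧ x j ≤ Afun n c L j x) (d : Fin n → ℝ) :
    ∃ σ, ∑ j ∈ Ioi k, d j * x j ≤ ∑ j ∈ Ioi k, d j * mvec n c L σ j := by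
  induction k using WellFoundedGT.induction generalizing d with
  | _ k ih =>
  by_cases hmax : IsMax k
  · exact ⟨fun _ => true, by simp [Ioi_eq_empty.mpr hmax]⟩
  set k' := Order.succ k
  have hkk' : k < k' := Order.lt_succ_of_not_isMax hmax
  have hIoi : Ioi k = insert k' (Ioi k') := by
    rw [← Ici_succ_eq_Ioi_of_not_isMax hmax, Ioi_insert]
  have hk' : k' ∉ Ioi k' := fun h => (mem_Ioi.mp h).false
  obtain ⟨hx0, hxA⟩ := hx k' hkk'
  have hx' : ∀ j, k' < j → 0 ≤ x j ∧ x j ≤ Afun n c L j x := fun j hj => hx j (hkk'.trans hj)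
  rw [hIoi]
  rcases le_or_gt (d k') 0 with hd | hd
  · obtain ⟨σ, hσ⟩ := ih k' hkk' hx' d
    refine ⟨Function.update σ k' true, ?_⟩
    rw [sum_insert hk', sum_insert hk', mvec_eq, Function.update_self, if_pos rfl,
      sum_Ioi_mul_mvec_update]
    linarith [mul_nonpos_of_nonpos_of_nonneg hd hx0]
  · -- substituting the bound `x_{k'} ≤ A_{k'}(x)` leaves the functional `d - d_{k'} c_{k'}`
    obtain ⟨σ, hσ⟩ := ih k' hkk' hx' fun j => d j - d k' * c k' j
    refine ⟨Function.update σ k' false, ?_⟩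
    rw [sum_insert hk', sum_insert hk', mvec_eq, Function.update_self, if_neg Bool.false_ne_true,
      afun_congr fun j hj => mvec_update_of_lt _ hj,
      sum_Ioi_mul_mvec_update]
    have hxA' := mul_le_mul_of_nonneg_left hxA hd.le
    simp only [sub_mul, sum_sub_distrib, mul_assoc, ← mul_sum] at hσ
    rw [afun_eq_sub_sum_Ioi] at hxA' ⊢
    linarith

lemma condP_of_forall_mvec_mem_Pset (h : ∀ σ, mvec n c L σ ∈ Pset n c L) : CondP n c L := by
  intro k x hx
  obtain ⟨σ, hσ⟩ := exists_sum_Ioi_le_sum_mvec k hx fun j => c k j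
  calc 0 ≤ Afun n c L k (mvec n c L σ) := (h σ k).1.trans (h σ k).2
    _ ≤ Afun n c L k x := by rw [afun_eq_sub_sum_Ioi, afun_eq_sub_sum_Ioi]; linarith

theorem condP_iff_forall_mvec_mem_Pset : CondP n c L ↔ ∀ σ, mvec n c L σ ∈ Pset n c L :=
  ⟨mvec_mem_Pset_of_condP, condP_of_forall_mvec_mem_Pset⟩

lemma isClosed_Pset : IsClosed (Pset n c L) := by
  simp only [Pset, Set.ofPred_forall, Set.ofPred_and]
  exact isClosed_iInter fun j =>
    (isClosed_le continuous_const (continuous_apply j)).inter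
      (isClosed_le (continuous_apply j) (continuous_afun j))

lemma Cset_eq_Pset_of_condP (hP : CondP n c L) : Cset n c L = Pset n c L := by
  refine Set.Subset.antisymm (fun x hx j => ?_) fun x hx k => Or.inr (hx k)
  induction j using WellFoundedGT.induction with
  | _ j ih =>
    have hA : 0 ≤ Afun n c L j x := hP j x ih
    rcases hx j with ⟨h1, h2⟩ | h
    · linarith
    · exact h

/-- `min 0 (A_j/2)` satisfies (S-j) whatever the sign of `A_j`, and depends continuously on `y`. -/
noncomputable def extendBelow (n : ℕ) (c : Fin n → Fin n → ℤ) (L : Fin n → ℤ) (k : Fin n)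
    (y : Fin n → ℝ) (j : Fin n) : ℝ :=
  if k ≤ j then y j
  else min 0 (((L j : ℝ) - ∑ i ∈ (Ioi j).attach, (c j i.1 : ℝ) * extendBelow n c L k y i.1) / 2)
termination_by n - j.1
decreasing_by
  have := Fin.lt_def.mp (mem_Ioi.mp i.2)
  have := i.1.isLt
  omega

lemma extendBelow_eq (k : Fin n) (y : Fin n → ℝ) (j : Fin n) :
    extendBelow n c L k y j =
      if k ≤ j then y j else min 0 (Afun n c L j (extendBelow n c L k y) / 2) := by
  rw [extendBelow, sum_attach _ fun i => (c j i : ℝ) * extendBelow n c L k y i,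
    afun_eq_sub_sum_Ioi]

lemma extendBelow_of_le {k j : Fin n} (y : Fin n → ℝ) (h : k ≤ j) :
    extendBelow n c L k y j = y j := by
  rw [extendBelow_eq, if_pos h]

lemma extendBelow_mem_Cset {k : Fin n} {y : Fin n → ℝ} (hy : ∀ j, k ≤ j → Scond n c L j y) :
    extendBelow n c L k y ∈ Cset n c L := by
  intro j
  rcases le_or_gt k j with hkj | hjk
  · exact (scond_congr fun i hi => extendBelow_of_le y (hkj.trans hi)).mpr (hy j hkj)
  · have hj := extendBelow_eq (c := c) (L := L) k y j
    rw [if_neg hjk.not_ge] at hj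
    rw [Scond, hj]
    rcases le_or_gt 0 (Afun n c L j (extendBelow n c L k y)) with hA | hA
    · rw [min_eq_left (div_nonneg hA zero_le_two)]
      exact Or.inr ⟨le_rfl, hA⟩
    · left
      rw [min_eq_right (by linarith)]
      constructor <;> linarith

lemma continuous_extendBelow (k : Fin n) : Continuous (extendBelow n c L k) := by
  refine continuous_pi fun j => ?_
  induction j using WellFoundedGT.induction with
  | _ j ih =>
    simp_rw [extendBelow_eq (j := j), afun_eq_sub_sum_Ioi]
    split_ifs
    · exact continuous_apply j
    · exact continuous_const.min <| (continuous_const.sub <| continuous_finsetSum _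
        fun i hi => continuous_const.mul (ih i (mem_Ioi.mp hi))).div_const 2

lemma condP_of_isClosed_Cset (hC : IsClosed (Cset n c L)) : CondP n c L := by
  by_contra hP
  simp only [CondP, not_forall, not_le] at hP
  obtain ⟨k, x, hx, hA⟩ := hP
  set a := Afun n c L k x
  let z : ℝ → Fin n → ℝ := fun t => extendBelow n c L k (Function.update x k (a + t))
  have hz : Continuous z :=
    (continuous_extendBelow k).comp (continuous_const.update k (continuous_const.add continuous_id))
  have hzA : ∀ t, Afun n c L k (z t) = a := fun t =>
    afun_congr fun i hi => by
      simp only [z]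
      rw [extendBelow_of_le _ hi.le, Function.update_of_ne hi.ne']
  have hzk : ∀ t, z t k = a + t := fun t => by
    simp only [z]
    rw [extendBelow_of_le _ le_rfl, Function.update_self]
  have hmem : Set.Ioo 0 (-a) ⊆ z ⁻¹' Cset n c L := by
    intro t ⟨ht0, hta⟩
    refine extendBelow_mem_Cset fun j hkj => ?_
    rcases hkj.lt_or_eq with hkj | rfl
    · have hsame : ∀ i, j ≤ i → Function.update x k (a + t) i = x i := fun i hi =>
        Function.update_of_ne (hkj.trans_le hi).ne' _ _
      exact (scond_congr hsame).mpr (Or.inr (hx j hkj))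
    · rw [Scond, Function.update_self, afun_congr fun i hi => Function.update_of_ne hi.ne' _ _]
      exact Or.inl ⟨by linarith, by linarith⟩
  have h0 : (0 : ℝ) ∈ z ⁻¹' Cset n c L :=
    (hC.preimage hz).closure_subset_iff.mpr hmem <| by
      rw [closure_Ioo (by linarith)]
      exact ⟨le_rfl, by linarith⟩
  rcases h0 k with ⟨h, _⟩ | ⟨h, _⟩ <;> simp only [hzA, hzk, add_zero] at h <;> linarith

theorem isClosed_Cset_iff_condP : IsClosed (Cset n c L) ↔ CondP n c L :=
  ⟨condP_of_isClosed_Cset, fun hP => Cset_eq_Pset_of_condP hP ▸ isClosed_Pset⟩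

theorem isClosed_Cset_iff_mvec_mem_Pset_general (n : ℕ)
    (c : Fin n → Fin n → ℤ) (L : Fin n → ℤ) :
    IsClosed (Cset n c L) ↔ ∀ σ : Fin n → Bool, mvec n c L σ ∈ Pset n c L :=
  isClosed_Cset_iff_condP.trans condP_iff_forall_mvec_mem_Pset

/-- `C(c,ℓ)` is closed iff `m_σ ∈ P(c,ℓ)` for every sign vector `σ`. -/
theorem isClosed_Cset_iff_mvec_mem_Pset (n : ℕ) (hn : 0 < n)
    (c : Fin n → Fin n → ℤ) (L : Fin n → ℤ) :
    IsClosed (Cset n c L) ↔ ∀ σ : Fin n → Bool, mvec n c L σ ∈ Pset n c L :=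
  isClosed_Cset_iff_mvec_mem_Pset_general n c L
end

section
/- If the twisted-cube support C(c,ℓ) is closed in ℝ^n, then C(c,ℓ) is a convex subset of ℝ^n and ℓ_k ≥ 0 for all k with 1 ≤ k ≤ n. -/
noncomputable def fill (n : ℕ) (c : Fin n → Fin n → ℤ) (L : Fin n → ℤ)
    (x : Fin n → ℝ) (K : ℕ) (j : Fin n) : ℝ :=
  if K ≤ j.1 then x j
  else
    let a := (L j : ℝ) - ∑ k ∈ (Finset.univ.filter (fun k => j < k)).attach,
      (c j k.1 : ℝ) * fill n c L x K k.1
    if 0 ≤ a then 0 else a / 2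
termination_by n - j.1
decreasing_by
  have hk := Fin.lt_iff_val_lt_val.mp (Finset.mem_filter.mp k.2).2
  have := k.1.isLt
  omega

noncomputable def fillBound (n : ℕ) (c : Fin n → Fin n → ℤ) (L : Fin n → ℤ)
    (M : ℝ) (K : ℕ) (j : Fin n) : ℝ :=
  if K ≤ j.1 then M
  else |(L j : ℝ)| + ∑ k ∈ (Finset.univ.filter (fun k => j < k)).attach,
      |(c j k.1 : ℝ)| * fillBound n c L M K k.1
termination_by n - j.1
decreasing_by
  have hk := Fin.lt_iff_val_lt_val.mp (Finset.mem_filter.mp k.2).2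
  have := k.1.isLt
  omega

lemma fill_eq_of_le {n c L x K} {j : Fin n} (h : K ≤ j.1) : fill n c L x K j = x j := by
  rw [fill]; simp [h]

lemma Afun_fill {n c L x K} {j : Fin n} (h : j.1 < K) :
    fill n c L x K j =
      if 0 ≤ Afun n c L j (fill n c L x K) then 0 else Afun n c L j (fill n c L x K) / 2 := by
  rw [fill]
  have hA : Afun n c L j (fill n c L x K) =
      (L j : ℝ) - ∑ k ∈ (Finset.univ.filter (fun k => j < k)).attach,
        (c j k.1 : ℝ) * fill n c L x K k.1 := by
    rw [Afun, Finset.sum_attach _ (fun k => (c j k : ℝ) * fill n c L x K k)]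
  simp [Nat.not_le.mpr h, ← hA]

lemma scond_fill {n c L x K} {j : Fin n} (h : j.1 < K) :
    Scond n c L j (fill n c L x K) := by
  have := Afun_fill (n := n) (c := c) (L := L) (x := x) (K := K) h
  by_cases h0 : 0 ≤ Afun n c L j (fill n c L x K)
  · right; rw [this, if_pos h0]; exact ⟨le_refl 0, h0⟩
  · left; rw [this, if_neg h0]
    push_neg at h0
    constructor <;> linarith

lemma Afun_congr {n c L} {j : Fin n} {x y : Fin n → ℝ}
    (h : ∀ k, j < k → x k = y k) : Afun n c L j x = Afun n c L j y := by
  unfold Afun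
  congr 1
  refine Finset.sum_congr rfl fun k hk => ?_
  rw [h k (Finset.mem_filter.mp hk).2]

lemma fillBound_nonneg {n c L M K} (hM : 0 ≤ M) (j : Fin n) :
    0 ≤ fillBound n c L M K j := by
  rw [fillBound]
  split
  · exact hM
  · have : ∀ k ∈ (Finset.univ.filter (fun k => j < k)).attach,
        0 ≤ |(c j k.1 : ℝ)| * fillBound n c L M K k.1 := by
      intro k _
      exact mul_nonneg (abs_nonneg _) (fillBound_nonneg hM k.1)
    exact add_nonneg (abs_nonneg _) (Finset.sum_nonneg this)
termination_by n - j.1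
decreasing_by
  have hk := Fin.lt_iff_val_lt_val.mp (Finset.mem_filter.mp k.2).2
  have := k.1.isLt
  omega

lemma abs_fill_le {n c L K M} {x : Fin n → ℝ} (hM : 0 ≤ M) (hx : ∀ j, |x j| ≤ M)
    (j : Fin n) : |fill n c L x K j| ≤ fillBound n c L M K j := by
  by_cases h : K ≤ j.1
  · rw [fill_eq_of_le h, fillBound, if_pos h]; exact hx j
  · push_neg at h
    rw [Afun_fill h, fillBound, if_neg (Nat.not_le.mpr h)]
    have hsum : ∀ k ∈ (Finset.univ.filter (fun k => j < k)).attach,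
        |(c j k.1 : ℝ) * fill n c L x K k.1| ≤ |(c j k.1 : ℝ)| * fillBound n c L M K k.1 := by
      intro k _
      rw [abs_mul]
      exact mul_le_mul_of_nonneg_left (abs_fill_le hM hx k.1) (abs_nonneg _)
    have hA : |Afun n c L j (fill n c L x K)| ≤
        |(L j : ℝ)| + ∑ k ∈ (Finset.univ.filter (fun k => j < k)).attach,
          |(c j k.1 : ℝ)| * fillBound n c L M K k.1 := by
      have : Afun n c L j (fill n c L x K) =
          (L j : ℝ) - ∑ k ∈ (Finset.univ.filter (fun k => j < k)).attach,
            (c j k.1 : ℝ) * fill n c L x K k.1 := by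
        rw [Afun, Finset.sum_attach _ (fun k => (c j k : ℝ) * fill n c L x K k)]
      rw [this]
      calc |(L j : ℝ) - _| ≤ |(L j : ℝ)| + |∑ k ∈ (Finset.univ.filter (fun k => j < k)).attach,
            (c j k.1 : ℝ) * fill n c L x K k.1| := abs_sub _ _
        _ ≤ _ := by
            gcongr
            exact (Finset.abs_sum_le_sum_abs _ _).trans (Finset.sum_le_sum hsum)
    have hRnn : 0 ≤ |(L j : ℝ)| + ∑ k ∈ (Finset.univ.filter (fun k => j < k)).attach,
        |(c j k.1 : ℝ)| * fillBound n c L M K k.1 := by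
      have : ∀ k ∈ (Finset.univ.filter (fun k => j < k)).attach,
          0 ≤ |(c j k.1 : ℝ)| * fillBound n c L M K k.1 := fun k _ =>
        mul_nonneg (abs_nonneg _) (fillBound_nonneg hM k.1)
      exact add_nonneg (abs_nonneg _) (Finset.sum_nonneg this)
    split
    · simpa using hRnn
    · rw [abs_div]
      have := abs_nonneg (Afun n c L j (fill n c L x K))
      calc |Afun n c L j (fill n c L x K)| / |(2:ℝ)| ≤ |Afun n c L j (fill n c L x K)| := by
            rw [abs_two]; linarith
        _ ≤ _ := hA
termination_by n - j.1
decreasing_by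
  have hk := Fin.lt_iff_val_lt_val.mp (Finset.mem_filter.mp k.2).2
  have := k.1.isLt
  omega

lemma mem_Cset_nonneg {n : ℕ} {c : Fin n → Fin n → ℤ} {L : Fin n → ℤ}
    (h : IsClosed (Cset n c L)) {x : Fin n → ℝ} (hx : x ∈ Cset n c L) (k : Fin n) :
    0 ≤ x k ∧ x k ≤ Afun n c L k x := by
  rcases hx k with ⟨hAx, hxk⟩ | hpos
  · exfalso
    -- the sequence of points approaching x k → 0
    set t : ℕ → ℝ := fun m => x k / (m + 1) with ht
    set u : ℕ → (Fin n → ℝ) := fun m => fill n c L (Function.update x k (t m)) k.1 with hu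
    have htneg : ∀ m, t m < 0 := fun m =>
      div_neg_of_neg_of_pos hxk (by positivity)
    have htge : ∀ m, x k ≤ t m := by
      intro m
      rw [ht]
      rw [le_div_iff₀ (by positivity : (0:ℝ) < (m:ℝ) + 1)]
      nlinarith [hxk]
    -- u m agrees with x above k and has value t m at k
    have huk : ∀ m, u m k = t m := by
      intro m
      rw [hu]; simp only
      rw [fill_eq_of_le (le_refl _), Function.update_self]
    have hugt : ∀ m, ∀ j : Fin n, k < j → u m j = x j := by
      intro m j hj
      rw [hu]; simp only
      rw [fill_eq_of_le (le_of_lt hj), Function.update_of_ne (ne_of_gt hj)]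
    have huA : ∀ m, ∀ j : Fin n, k ≤ j → Afun n c L j (u m) = Afun n c L j x := by
      intro m j hj
      exact Afun_congr fun k' hk' => hugt m k' (lt_of_le_of_lt hj hk')
    -- u m ∈ Cset
    have huC : ∀ m, u m ∈ Cset n c L := by
      intro m j
      rcases lt_trichotomy j k with hj | hj | hj
      · exact scond_fill hj
      · subst hj
        left
        rw [huk, huA m j (le_refl _)]
        exact ⟨lt_of_lt_of_le hAx (htge m), htneg m⟩
      · have := hx j
        rwa [Scond, ← huA m j (le_of_lt hj), ← hugt m j hj] at this
    -- boundedness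
    set M : ℝ := ‖x‖ with hMdef
    have hM : 0 ≤ M := norm_nonneg x
    have hxM : ∀ m, ∀ j, |Function.update x k (t m) j| ≤ M := by
      intro m j
      rcases eq_or_ne j k with rfl | hjk
      · rw [Function.update_self]
        have h1 : |t m| ≤ |x j| := by
          rw [ht, abs_div]
          have : |(m:ℝ) + 1| = (m:ℝ) + 1 := abs_of_pos (by positivity)
          rw [this]
          exact div_le_self (abs_nonneg _) (by linarith [Nat.cast_nonneg (α := ℝ) m])
        exact h1.trans (by rw [← Real.norm_eq_abs]; exact norm_le_pi_norm x j)
      · rw [Function.update_of_ne hjk, ← Real.norm_eq_abs]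
        exact norm_le_pi_norm x j
    set S : Set (Fin n → ℝ) :=
      Set.univ.pi (fun j => Set.Icc (-(fillBound n c L M k.1 j)) (fillBound n c L M k.1 j))
      with hSdef
    have hS : IsCompact S := isCompact_univ_pi fun j => isCompact_Icc
    have huS : ∀ m, u m ∈ S := by
      intro m
      rw [hSdef, Set.mem_univ_pi]
      intro j
      exact Set.mem_Icc.mpr (abs_le.mp (abs_fill_le hM (hxM m) j))
    obtain ⟨y, -, φ, hφ, hcv⟩ := hS.tendsto_subseq huS
    have hyC : y ∈ Cset n c L :=
      h.mem_of_tendsto hcv (Filter.Eventually.of_forall fun i => huC (φ i))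
    -- y k = 0
    have ht0 : Filter.Tendsto t Filter.atTop (nhds 0) := by
      have := tendsto_one_div_add_atTop_nhds_zero_nat.const_mul (x k)
      simp only [mul_zero] at this
      refine this.congr fun m => ?_
      rw [ht]; ring
    have hyk : y k = 0 := by
      have h1 : Filter.Tendsto (fun i => (u ∘ φ) i k) Filter.atTop (nhds (y k)) :=
        tendsto_pi_nhds.mp hcv k
      have h2 : Filter.Tendsto (fun i => t (φ i)) Filter.atTop (nhds 0) :=
        ht0.comp hφ.tendsto_atTop
      exact tendsto_nhds_unique (h1.congr fun i => by simp [huk]) h2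
    have hyj : ∀ j : Fin n, k < j → y j = x j := by
      intro j hj
      have h1 : Filter.Tendsto (fun i => (u ∘ φ) i j) Filter.atTop (nhds (y j)) :=
        tendsto_pi_nhds.mp hcv j
      exact tendsto_nhds_unique (h1.congr fun i => by simp [hugt _ j hj]) tendsto_const_nhds
    have hyA : Afun n c L k y = Afun n c L k x := Afun_congr fun k' hk' => hyj k' hk'
    rcases hyC k with ⟨-, hbad⟩ | ⟨-, hbad⟩
    · rw [hyk] at hbad; exact lt_irrefl 0 hbad
    · rw [hyk, hyA] at hbad; linarith
  · exact hpos

lemma Afun_combo {n c L} (j : Fin n) (a b : ℝ) (hab : a + b = 1) (x y : Fin n → ℝ) :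
    Afun n c L j (a • x + b • y) = a * Afun n c L j x + b * Afun n c L j y := by
  unfold Afun
  simp only [Pi.add_apply, Pi.smul_apply, smul_eq_mul]
  rw [show ∑ k ∈ Finset.univ.filter (fun k => j < k), (c j k : ℝ) * (a * x k + b * y k)
      = a * ∑ k ∈ Finset.univ.filter (fun k => j < k), (c j k : ℝ) * x k
      + b * ∑ k ∈ Finset.univ.filter (fun k => j < k), (c j k : ℝ) * y k from by
    rw [Finset.mul_sum, Finset.mul_sum, ← Finset.sum_add_distrib]
    exact Finset.sum_congr rfl fun k _ => by ring]
  linear_combination (L j : ℝ) * hab.symm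


theorem convex_and_ell_nonneg_of_isClosed (n : ℕ) (hn : 0 < n)
    (c : Fin n → Fin n → ℤ) (L : Fin n → ℤ)
    (h : IsClosed (Cset n c L)) :
    Convex ℝ (Cset n c L) ∧ ∀ k : Fin n, 0 ≤ L k := by
  constructor
  · have hCP : Cset n c L = Pset n c L :=
      Set.ext fun x => ⟨fun hx j => mem_Cset_nonneg h hx j, fun hx j => Or.inr (hx j)⟩
    rw [hCP]
    intro x hx y hy a b ha hb hab j
    have hxj := hx j
    have hyj := hy j
    constructor
    · have : (a • x + b • y) j = a * x j + b * y j := by simp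
      rw [this]
      exact add_nonneg (mul_nonneg ha hxj.1) (mul_nonneg hb hyj.1)
    · rw [Afun_combo j a b hab]
      have : (a • x + b • y) j = a * x j + b * y j := by simp
      rw [this]
      exact add_le_add (mul_le_mul_of_nonneg_left hxj.2 ha)
        (mul_le_mul_of_nonneg_left hyj.2 hb)
  · intro k
    set z : Fin n → ℝ := fill n c L (fun _ => 0) n with hz
    have hzC : z ∈ Cset n c L := fun j => scond_fill j.isLt
    have hkey := fun j => mem_Cset_nonneg h hzC j
    have hz0 : ∀ j, z j = 0 := by
      intro j
      have e := Afun_fill (n := n) (c := c) (L := L) (x := fun _ => (0:ℝ)) (K := n) j.isLt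
      rw [← hz] at e
      by_cases hA : 0 ≤ Afun n c L j z
      · rw [e, if_pos hA]
      · exfalso
        have h1 := (hkey j).1
        rw [e, if_neg hA] at h1
        push_neg at hA
        linarith
    have hAz : Afun n c L k z = (L k : ℝ) := by
      unfold Afun
      simp [hz0]
    have h0 : (0:ℝ) ≤ (L k : ℝ) := by
      have := (hkey k).2
      rw [hz0 k, hAz] at this
      exact this
    exact_mod_cast h0
end
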